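/- Let X ⊂ ℝ^d be a compact convex set with nonempty interior and let e be a fixed unit vector. Let T_e be the Markov kernel on X given by T_e(x, ·) = ν_{x,e}, the uniform probability measure on the chord of X through x in direction e. Then the uniform probability measure on X (normalized d-dimensional Lebesgue measure restricted to X) is invariant under T_e. -/

import Mathlib

open MeasureTheory

/-- The uniform probability measure `ν_{x,e}` on the chord `{x + t·e : t ∈ ℝ} ∩ X` of `X`
through `x` in direction `e` (a unit vector): it is the pushforward under `t ↦ x + t·e` of
the normalized Lebesgue measure on the parameter set `{t : x + t·e ∈ X}`, or the Dirac
mass at `x` if the chord is degenerate. -/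
noncomputable def chordMeasure {d : ℕ} (X : Set (EuclideanSpace ℝ (Fin d)))
    (e x : EuclideanSpace ℝ (Fin d)) : Measure (EuclideanSpace ℝ (Fin d)) :=
  if volume {t : ℝ | x + t • e ∈ X} = 0 then Measure.dirac x
  else (volume {t : ℝ | x + t • e ∈ X})⁻¹ •
    Measure.map (fun t : ℝ => x + t • e) (volume.restrict {t : ℝ | x + t • e ∈ X})

/-- The uniform probability measure on `X`: normalized Lebesgue measure restricted to `X`. -/
noncomputable def uniformOn {d : ℕ} (X : Set (EuclideanSpace ℝ (Fin d))) :
    Measure (EuclideanSpace ℝ (Fin d)) :=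
  (volume X)⁻¹ • volume.restrict X

/-! Both `x ↦ 1_X(x) ν_{x,e}(A)` and `1_{X ∩ A}` integrate, along every line in direction `e`,
to the length of that line's intersection with `X ∩ A`: the chord measure is the same at every
point of a chord, and the chord has finite length because `X` is bounded. Nonnegative functions
with the same integrals along all lines in direction `e` have the same Lebesgue integral: if
`ℓ e = 1`, every line in direction `e` spends exactly unit time in the slab `{0 ≤ ℓ ≤ 1}`, so by
Tonelli and translation invariance `∫ g = ∫_{slab} ∫_ℝ g (x + t e) dt dx`. -/

open Set
open scoped ENNReal

section LineIntegral

variable {E : Type*} [NormedAddCommGroup E] [NormedSpace ℝ E]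

theorem volume_setOf_add_smul_mem_ne_top {B : Set E} (hB : Bornology.IsBounded B) {e : E}
    (he : ‖e‖ = 1) (x : E) : volume {t : ℝ | x + t • e ∈ B} ≠ ∞ := by
  have hiso : Isometry fun t : ℝ => x + t • e := Isometry.of_dist_eq fun s t => by
    rw [dist_add_left, dist_eq_norm, ← sub_smul, norm_smul, he, mul_one, Real.dist_eq,
      Real.norm_eq_abs]
  exact (hiso.antilipschitz.isBounded_preimage hB).measure_lt_top.ne

theorem volume_setOf_add_smul_add_smul_mem (B : Set E) (x e : E) (s : ℝ) :
    volume {t : ℝ | x + s • e + t • e ∈ B} = volume {t : ℝ | x + t • e ∈ B} := by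
  have hshift : {t : ℝ | x + s • e + t • e ∈ B} = (s + ·) ⁻¹' {t : ℝ | x + t • e ∈ B} := by
    ext t; simp only [mem_ofPred_eq, mem_preimage, add_smul, add_assoc]
  rw [hshift, measure_preimage_add]

variable [MeasurableSpace E] [BorelSpace E]

theorem measurable_add_smul_const (e : E) : Measurable fun p : E × ℝ => p.1 + p.2 • e :=
  (continuous_fst.add (continuous_snd.smul continuous_const)).measurable

theorem measurable_volume_setOf_add_smul_mem {B : Set E} (hB : MeasurableSet B) (e : E) :
    Measurable fun x => volume {t : ℝ | x + t • e ∈ B} :=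
  measurable_measure_prodMk_left (measurable_add_smul_const e hB)

theorem lintegral_indicator_one_add_smul {B : Set E} (hB : MeasurableSet B) (x e : E) :
    ∫⁻ t : ℝ, B.indicator 1 (x + t • e) = volume {t : ℝ | x + t • e ∈ B} := by
  have hS : MeasurableSet {t : ℝ | x + t • e ∈ B} :=
    (measurable_add_smul_const e).comp measurable_prodMk_left hB
  rw [← lintegral_indicator_one hS]
  rfl

variable {μ : Measure E} [SFinite μ] [μ.IsAddRightInvariant]

theorem lintegral_eq_setLIntegral_lintegral_add_smul (ℓ : StrongDual ℝ E) {e : E}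
    (hℓe : ℓ e = 1) {g : E → ℝ≥0∞} (hg : Measurable g) :
    ∫⁻ y, g y ∂μ = ∫⁻ x in ℓ ⁻¹' Icc 0 1, (∫⁻ t : ℝ, g (x + t • e)) ∂μ := by
  set S := ℓ ⁻¹' Icc 0 1
  have hS : MeasurableSet S := ℓ.continuous.measurable measurableSet_Icc
  have hS₁ : Measurable (S.indicator (1 : E → ℝ≥0∞)) := measurable_one.indicator hS
  have hline (y : E) : ∫⁻ t : ℝ, S.indicator 1 (y - t • e) = 1 := by
    have hpre : (fun t : ℝ => y - t • e) ⁻¹' S = Icc (ℓ y - 1) (ℓ y) := by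
      ext t; simp only [S, mem_preimage, mem_Icc, map_sub, map_smul, hℓe, smul_eq_mul, mul_one]
      constructor <;> rintro ⟨h₁, h₂⟩ <;> constructor <;> linarith
    simp_rw [← indicator_comp_right (fun t : ℝ => y - t • e), hpre]
    rw [Pi.one_comp, lintegral_indicator_one measurableSet_Icc, Real.volume_Icc]
    simp
  have hF : Measurable (Function.uncurry fun x (t : ℝ) => S.indicator 1 x * g (x + t • e)) :=
    (hS₁.comp measurable_fst).mul (hg.comp (measurable_add_smul_const e))
  have hF' : Measurable (Function.uncurry fun y (t : ℝ) => S.indicator 1 (y - t • e) * g y) :=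
    (hS₁.comp (continuous_fst.sub (continuous_snd.smul continuous_const)).measurable).mul
      (hg.comp measurable_fst)
  calc ∫⁻ y, g y ∂μ = ∫⁻ y, (∫⁻ t : ℝ, S.indicator 1 (y - t • e)) * g y ∂μ := by
        simp only [hline, one_mul]
    _ = ∫⁻ y, (∫⁻ t : ℝ, S.indicator 1 (y - t • e) * g y) ∂μ :=
        lintegral_congr fun y => (lintegral_mul_const _
          (hS₁.comp (continuous_const.sub (continuous_id.smul continuous_const)).measurable)).symm
    _ = ∫⁻ t : ℝ, ∫⁻ y, S.indicator 1 (y - t • e) * g y ∂μ :=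
        lintegral_lintegral_swap hF'.aemeasurable
    _ = ∫⁻ t : ℝ, ∫⁻ x, S.indicator 1 x * g (x + t • e) ∂μ := lintegral_congr fun t => by
        rw [← lintegral_add_right_eq_self _ (t • e)]
        simp only [add_sub_cancel_right]
    _ = ∫⁻ x, (∫⁻ t : ℝ, S.indicator 1 x * g (x + t • e)) ∂μ :=
        (lintegral_lintegral_swap hF.aemeasurable).symm
    _ = ∫⁻ x in S, (∫⁻ t : ℝ, g (x + t • e)) ∂μ := by
        rw [← lintegral_indicator hS]
        refine lintegral_congr fun x => ?_
        by_cases hx : x ∈ S <;> simp [hx]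

theorem lintegral_eq_of_lintegral_add_smul_eq {e : E} (he : e ≠ 0) {f g : E → ℝ≥0∞}
    (hf : Measurable f) (hg : Measurable g)
    (hfg : ∀ x, ∫⁻ t : ℝ, f (x + t • e) = ∫⁻ t : ℝ, g (x + t • e)) :
    ∫⁻ y, f y ∂μ = ∫⁻ y, g y ∂μ := by
  obtain ⟨ℓ, -, hℓ⟩ := exists_dual_vector ℝ e (norm_ne_zero_iff.mpr he)
  have hℓe : (‖e‖⁻¹ • ℓ) e = 1 := by simp [hℓ, he]
  simp only [lintegral_eq_setLIntegral_lintegral_add_smul _ hℓe hf,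
    lintegral_eq_setLIntegral_lintegral_add_smul _ hℓe hg, hfg]

end LineIntegral

section Chord

variable {d : ℕ} {X A : Set (EuclideanSpace ℝ (Fin d))} {e : EuclideanSpace ℝ (Fin d)}

theorem chordMeasure_apply (hA : MeasurableSet A) {x : EuclideanSpace ℝ (Fin d)}
    (hx : volume {t : ℝ | x + t • e ∈ X} ≠ 0) :
    chordMeasure X e x A =
      (volume {t : ℝ | x + t • e ∈ X})⁻¹ * volume {t : ℝ | x + t • e ∈ X ∩ A} := by
  have hmeas : Measurable fun t : ℝ => x + t • e :=
    (measurable_add_smul_const e).comp measurable_prodMk_left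
  rw [chordMeasure, if_neg hx, Measure.smul_apply, smul_eq_mul, Measure.map_apply hmeas hA,
    Measure.restrict_apply (hmeas hA), inter_comm]
  rfl

theorem chordMeasure_add_smul {x : EuclideanSpace ℝ (Fin d)}
    (hx : volume {t : ℝ | x + t • e ∈ X} ≠ 0) (s : ℝ) :
    chordMeasure X e (x + s • e) = chordMeasure X e x := by
  ext A hA
  have hxs : volume {t : ℝ | x + s • e + t • e ∈ X} ≠ 0 := by
    rwa [volume_setOf_add_smul_add_smul_mem]
  rw [chordMeasure_apply hA hx, chordMeasure_apply hA hxs, volume_setOf_add_smul_add_smul_mem,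
    volume_setOf_add_smul_add_smul_mem]

theorem measurable_chordMeasure_apply (hX : MeasurableSet X) (hA : MeasurableSet A) :
    Measurable fun x => chordMeasure X e x A := by
  have hL := measurable_volume_setOf_add_smul_mem hX e
  have hchord : (fun x => chordMeasure X e x A) = fun x =>
      if volume {t : ℝ | x + t • e ∈ X} = 0 then A.indicator 1 x
      else (volume {t : ℝ | x + t • e ∈ X})⁻¹ * volume {t : ℝ | x + t • e ∈ X ∩ A} := by
    ext x
    split_ifs with hx
    · rw [chordMeasure, if_pos hx, Measure.dirac_apply' x hA]
    · exact chordMeasure_apply hA hx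
  rw [hchord]
  exact Measurable.ite (hL (measurableSet_singleton 0)) (measurable_one.indicator hA)
    (hL.inv.mul (measurable_volume_setOf_add_smul_mem (hX.inter hA) e))

theorem lintegral_indicator_chordMeasure_add_smul (hX : MeasurableSet X) (hA : MeasurableSet A)
    {x : EuclideanSpace ℝ (Fin d)} (hfin : volume {t : ℝ | x + t • e ∈ X} ≠ ∞) :
    ∫⁻ t : ℝ, X.indicator (chordMeasure X e · A) (x + t • e) =
      volume {t : ℝ | x + t • e ∈ X ∩ A} := by
  set S := {t : ℝ | x + t • e ∈ X}
  have hS : MeasurableSet S := (measurable_add_smul_const e).comp measurable_prodMk_left hX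
  have hpull : ∫⁻ t : ℝ, X.indicator (chordMeasure X e · A) (x + t • e) =
      ∫⁻ t in S, chordMeasure X e (x + t • e) A := by
    rw [← lintegral_indicator hS]
    rfl
  rw [hpull]
  by_cases hx : volume S = 0
  · rw [setLIntegral_measure_zero _ _ hx]
    exact (measure_mono_null (fun t ht => ht.1) hx).symm
  · simp only [chordMeasure_add_smul hx, setLIntegral_const, chordMeasure_apply hA hx]
    rw [mul_right_comm, ENNReal.inv_mul_cancel hx hfin, one_mul]

end Chord

theorem uniform_invariant_chord_kernel
    {d : ℕ} (X : Set (EuclideanSpace ℝ (Fin d)))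
    (hXc : IsCompact X)
    (e : EuclideanSpace ℝ (Fin d)) (he : ‖e‖ = 1) :
    ∀ A : Set (EuclideanSpace ℝ (Fin d)), MeasurableSet A →
      uniformOn X A = ∫⁻ x, chordMeasure X e x A ∂(uniformOn X) := by
  intro A hA
  have hX : MeasurableSet X := hXc.isClosed.measurableSet
  have hline (x : EuclideanSpace ℝ (Fin d)) :
      ∫⁻ t : ℝ, X.indicator (chordMeasure X e · A) (x + t • e) =
        ∫⁻ t : ℝ, (X ∩ A).indicator 1 (x + t • e) := by
    rw [lintegral_indicator_chordMeasure_add_smul hX hA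
        (volume_setOf_add_smul_mem_ne_top hXc.isBounded he x),
      lintegral_indicator_one_add_smul (hX.inter hA)]
  have he₀ : e ≠ 0 := norm_ne_zero_iff.mp (he ▸ one_ne_zero)
  calc uniformOn X A = (volume X)⁻¹ * ∫⁻ y, (X ∩ A).indicator 1 y := by
        rw [uniformOn, Measure.smul_apply, smul_eq_mul, Measure.restrict_apply hA, inter_comm,
          lintegral_indicator_one (hX.inter hA)]
    _ = (volume X)⁻¹ * ∫⁻ y, X.indicator (chordMeasure X e · A) y := by
        rw [lintegral_eq_of_lintegral_add_smul_eq he₀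
          ((measurable_chordMeasure_apply hX hA).indicator hX)
          (measurable_one.indicator (hX.inter hA)) hline]
    _ = ∫⁻ x, chordMeasure X e x A ∂uniformOn X := by
        rw [uniformOn, lintegral_smul_measure, lintegral_indicator hX, smul_eq_mul]
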